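/- arXiv:2603.12776 — 2 statements merged into one kernel-verified Lean document; each statement's English description precedes it below -/
import Mathlib

section
/- Under the Case-2 Setup, if t_i ≥ 5 for some index i, then u_i^- u_i^{l+} is an edge of G for every l with 3 ≤ l ≤ t_i − 2. -/
set_option linter.unusedSectionVars false
set_option maxHeartbeats 1000000


open SimpleGraph

variable {V : Type*}

/-- The independence number of a finite simple graph: the maximum size of a set of
pairwise non-adjacent vertices. -/
noncomputable def indepNum [Fintype V] (G : SimpleGraph V) : ℕ :=
  sSup {n : ℕ | ∃ s : Finset V, (∀ x ∈ s, ∀ y ∈ s, x ≠ y → ¬ G.Adj x y) ∧ s.card = n}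

/-- The vertex connectivity of a finite simple graph: the minimum size of a vertex set
whose removal leaves a graph that is disconnected or has at most one vertex. -/
noncomputable def vertexConnectivity [Fintype V] (G : SimpleGraph V) : ℕ :=
  sInf {k : ℕ | ∃ S : Finset V, S.card = k ∧
    (¬ (G.induce ((S : Set V)ᶜ)).Connected ∨ Fintype.card V ≤ S.card + 1)}

/-- `G` has a 2-factor (a spanning subgraph in which every vertex has degree exactly 2)
with at most two connected components. -/
def HasTwoFactorAtMostTwo [Fintype V] (G : SimpleGraph V) : Prop :=
  ∃ F : G.Subgraph, F.IsSpanning ∧ (∀ v : V, (F.neighborSet v).ncard = 2) ∧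
    Nat.card F.coe.ConnectedComponent ≤ 2


section zhelp
variable {M : ℕ} [NeZero M]

lemma val_succ (hM1 : 1 < M) (p : ZMod M) : (p + 1).val = (p.val + 1) % M := by
  haveI : Fact (1 < M) := ⟨hM1⟩
  rw [ZMod.val_add, ZMod.val_one]

lemma zmod_val_inj {p q : ZMod M} (h : p.val = q.val) : p = q := by
  have := congrArg (Nat.cast : ℕ → ZMod M) h
  rwa [ZMod.natCast_rightInverse p, ZMod.natCast_rightInverse q] at this

end zhelp

lemma aux_two_ne {M : ℕ} (h3 : 3 ≤ M) {q : ZMod M} : q + 1 ≠ q - 1 := by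
  haveI : NeZero M := ⟨by omega⟩
  intro h
  have h2 : ((2 : ℕ) : ZMod M) = 0 := by push_cast; linear_combination h
  have := congrArg ZMod.val h2
  rw [ZMod.val_cast_of_lt (by omega), ZMod.val_zero] at this
  omega

section engine
variable {G : SimpleGraph V}

def cycF (G : SimpleGraph V) {M1 M2 : ℕ} (e1 : ZMod M1 → V) (e2 : ZMod M2 → V)
    (adj1 : ∀ p, G.Adj (e1 p) (e1 (p+1))) (adj2 : ∀ p, G.Adj (e2 p) (e2 (p+1))) :
    G.Subgraph where
  verts := Set.univ
  Adj := fun v w =>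
    (∃ p, (v = e1 p ∧ w = e1 (p+1)) ∨ (w = e1 p ∧ v = e1 (p+1))) ∨
    (∃ p, (v = e2 p ∧ w = e2 (p+1)) ∨ (w = e2 p ∧ v = e2 (p+1)))
  adj_sub := by
    rintro v w (⟨p, ⟨rfl,rfl⟩|⟨rfl,rfl⟩⟩|⟨p, ⟨rfl,rfl⟩|⟨rfl,rfl⟩⟩)
    exacts [adj1 p, (adj1 p).symm, adj2 p, (adj2 p).symm]
  edge_vert := fun _ => Set.mem_univ _
  symm := by
    refine ⟨?_⟩
    rintro v w (⟨p, h|h⟩|⟨p, h|h⟩)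
    exacts [Or.inl ⟨p, Or.inr ⟨h.1, h.2⟩⟩, Or.inl ⟨p, Or.inl ⟨h.1, h.2⟩⟩,
      Or.inr ⟨p, Or.inr ⟨h.1, h.2⟩⟩, Or.inr ⟨p, Or.inl ⟨h.1, h.2⟩⟩]

lemma cycF_adj {M1 M2 : ℕ} {e1 : ZMod M1 → V} {e2 : ZMod M2 → V}
    {adj1 : ∀ p, G.Adj (e1 p) (e1 (p+1))} {adj2 : ∀ p, G.Adj (e2 p) (e2 (p+1))} {v w : V} :
    (cycF G e1 e2 adj1 adj2).Adj v w ↔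
    ((∃ p, (v = e1 p ∧ w = e1 (p+1)) ∨ (w = e1 p ∧ v = e1 (p+1))) ∨
    (∃ p, (v = e2 p ∧ w = e2 (p+1)) ∨ (w = e2 p ∧ v = e2 (p+1)))) := Iff.rfl

lemma engine2 [Fintype V] {M1 M2 : ℕ} (h1 : 3 ≤ M1) (h2 : 3 ≤ M2)
    (e1 : ZMod M1 → V) (e2 : ZMod M2 → V)
    (inj1 : Function.Injective e1) (inj2 : Function.Injective e2)
    (adj1 : ∀ p, G.Adj (e1 p) (e1 (p+1))) (adj2 : ∀ p, G.Adj (e2 p) (e2 (p+1)))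
    (disj : ∀ p q, e1 p ≠ e2 q)
    (cover : ∀ v : V, (∃ p, e1 p = v) ∨ (∃ q, e2 q = v)) :
    HasTwoFactorAtMostTwo G := by
  haveI : NeZero M1 := ⟨by omega⟩
  haveI : NeZero M2 := ⟨by omega⟩
  classical
  set F : G.Subgraph := cycF G e1 e2 adj1 adj2 with hF
  have hFadj1 : ∀ p : ZMod M1, F.Adj (e1 p) (e1 (p+1)) :=
    fun p => Or.inl ⟨p, Or.inl ⟨rfl, rfl⟩⟩
  have hFadj2 : ∀ p : ZMod M2, F.Adj (e2 p) (e2 (p+1)) :=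
    fun p => Or.inr ⟨p, Or.inl ⟨rfl, rfl⟩⟩
  refine ⟨F, fun v => Set.mem_univ v, ?_, ?_⟩
  · -- degrees
    intro v
    rcases cover v with ⟨q, rfl⟩ | ⟨q, rfl⟩
    · have hset : F.neighborSet (e1 q) = ({e1 (q+1), e1 (q-1)} : Set V) := by
        ext w
        rw [Subgraph.mem_neighborSet, cycF_adj]
        constructor
        · rintro (⟨p, ⟨h1,h2⟩|⟨h1,h2⟩⟩|⟨p, ⟨h1,h2⟩|⟨h1,h2⟩⟩)
          · exact Or.inl (by rw [h2, inj1 h1])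
          · refine Or.inr ?_
            have hp : p = q - 1 := by rw [inj1 h2]; ring
            rw [h1, hp]; exact Set.mem_singleton _
          · exact absurd h1 (disj q p)
          · exact absurd h2 (disj q (p+1))
        · rintro (rfl|rfl)
          · exact Or.inl ⟨q, Or.inl ⟨rfl, rfl⟩⟩
          · exact Or.inl ⟨q-1, Or.inr ⟨rfl, by rw [sub_add_cancel]⟩⟩
      rw [hset]
      exact Set.ncard_pair (fun h => aux_two_ne h1 (inj1 h))
    · have hset : F.neighborSet (e2 q) = ({e2 (q+1), e2 (q-1)} : Set V) := by
        ext w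
        rw [Subgraph.mem_neighborSet, cycF_adj]
        constructor
        · rintro (⟨p, ⟨h1,h2⟩|⟨h1,h2⟩⟩|⟨p, ⟨h1,h2⟩|⟨h1,h2⟩⟩)
          · exact absurd h1.symm (disj p q)
          · exact absurd h2.symm (disj (p+1) q)
          · exact Or.inl (by rw [h2, inj2 h1])
          · refine Or.inr ?_
            have hp : p = q - 1 := by rw [inj2 h2]; ring
            rw [h1, hp]; exact Set.mem_singleton _
        · rintro (rfl|rfl)
          · exact Or.inr ⟨q, Or.inl ⟨rfl, rfl⟩⟩
          · exact Or.inr ⟨q-1, Or.inr ⟨rfl, by rw [sub_add_cancel]⟩⟩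
      rw [hset]
      exact Set.ncard_pair (fun h => aux_two_ne h2 (inj2 h))
  · -- components
    have hv : ∀ x : V, x ∈ F.verts := fun x => Set.mem_univ x
    have hreach1 : ∀ n : ℕ, F.coe.Reachable ⟨e1 (n : ZMod M1), hv _⟩ ⟨e1 0, hv _⟩ := by
      intro n
      induction n with
      | zero => rw [Nat.cast_zero]
      | succ n ih =>
        have hadj : F.coe.Adj ⟨e1 ((n+1 : ℕ) : ZMod M1), hv _⟩ ⟨e1 (n : ZMod M1), hv _⟩ := by
          rw [Subgraph.coe_adj]
          have : ((n+1 : ℕ) : ZMod M1) = (n : ZMod M1) + 1 := by push_cast; ring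
          rw [this]
          exact F.adj_symm (hFadj1 _)
        exact hadj.reachable.trans ih
    have hreach2 : ∀ n : ℕ, F.coe.Reachable ⟨e2 (n : ZMod M2), hv _⟩ ⟨e2 0, hv _⟩ := by
      intro n
      induction n with
      | zero => rw [Nat.cast_zero]
      | succ n ih =>
        have hadj : F.coe.Adj ⟨e2 ((n+1 : ℕ) : ZMod M2), hv _⟩ ⟨e2 (n : ZMod M2), hv _⟩ := by
          rw [Subgraph.coe_adj]
          have : ((n+1 : ℕ) : ZMod M2) = (n : ZMod M2) + 1 := by push_cast; ring
          rw [this]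
          exact F.adj_symm (hFadj2 _)
        exact hadj.reachable.trans ih
    have hsurj : Function.Surjective (fun i : Fin 2 =>
        if i = 0 then F.coe.connectedComponentMk ⟨e1 0, hv _⟩
        else F.coe.connectedComponentMk ⟨e2 0, hv _⟩) := by
      intro cc
      induction cc using SimpleGraph.ConnectedComponent.ind with
      | _ z =>
        rcases cover z.1 with ⟨p, hp⟩ | ⟨p, hp⟩
        · refine ⟨0, ?_⟩
          simp only [if_pos rfl]
          have : z = ⟨e1 p, hv _⟩ := Subtype.ext hp.symm
          rw [this]
          have hz : F.coe.Reachable ⟨e1 p, hv _⟩ ⟨e1 0, hv _⟩ := by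
            have := hreach1 p.val
            rwa [ZMod.natCast_rightInverse p] at this
          exact (ConnectedComponent.sound hz).symm
        · refine ⟨1, ?_⟩
          simp only [if_neg (by decide : (1 : Fin 2) ≠ 0)]
          have : z = ⟨e2 p, hv _⟩ := Subtype.ext hp.symm
          rw [this]
          have hz : F.coe.Reachable ⟨e2 p, hv _⟩ ⟨e2 0, hv _⟩ := by
            have := hreach2 p.val
            rwa [ZMod.natCast_rightInverse p] at this
          exact (ConnectedComponent.sound hz).symm
    calc Nat.card F.coe.ConnectedComponent ≤ Nat.card (Fin 2) :=
          Nat.card_le_card_of_surjective _ hsurj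
      _ = 2 := by simp

end engine

section engine1
variable {G : SimpleGraph V}

lemma engine1 [Fintype V] {M1 : ℕ} (h1 : 3 ≤ M1)
    (e1 : ZMod M1 → V)
    (inj1 : Function.Injective e1)
    (adj1 : ∀ p, G.Adj (e1 p) (e1 (p+1)))
    (cover : ∀ v : V, ∃ p, e1 p = v) :
    HasTwoFactorAtMostTwo G := by
  haveI : NeZero M1 := ⟨by omega⟩
  classical
  set F : G.Subgraph := cycF G e1 e1 adj1 adj1 with hF
  have hFadj1 : ∀ p : ZMod M1, F.Adj (e1 p) (e1 (p+1)) :=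
    fun p => Or.inl ⟨p, Or.inl ⟨rfl, rfl⟩⟩
  refine ⟨F, fun v => Set.mem_univ v, ?_, ?_⟩
  · intro v
    obtain ⟨q, rfl⟩ := cover v
    have hset : F.neighborSet (e1 q) = ({e1 (q+1), e1 (q-1)} : Set V) := by
      ext w
      rw [Subgraph.mem_neighborSet, cycF_adj]
      constructor
      · rintro (⟨p, ⟨h1,h2⟩|⟨h1,h2⟩⟩|⟨p, ⟨h1,h2⟩|⟨h1,h2⟩⟩) <;>
        [ exact Or.inl (by rw [h2, inj1 h1]);
          skip;
          exact Or.inl (by rw [h2, inj1 h1]);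
          skip] <;>
        · refine Or.inr ?_
          have hp : p = q - 1 := by rw [inj1 h2]; ring
          rw [h1, hp]; exact Set.mem_singleton _
      · rintro (rfl|rfl)
        · exact Or.inl ⟨q, Or.inl ⟨rfl, rfl⟩⟩
        · exact Or.inl ⟨q-1, Or.inr ⟨rfl, by rw [sub_add_cancel]⟩⟩
    rw [hset]
    exact Set.ncard_pair (fun h => aux_two_ne h1 (inj1 h))
  · have hv : ∀ x : V, x ∈ F.verts := fun x => Set.mem_univ x
    have hreach1 : ∀ n : ℕ, F.coe.Reachable ⟨e1 (n : ZMod M1), hv _⟩ ⟨e1 0, hv _⟩ := by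
      intro n
      induction n with
      | zero => rw [Nat.cast_zero]
      | succ n ih =>
        have hadj : F.coe.Adj ⟨e1 ((n+1 : ℕ) : ZMod M1), hv _⟩ ⟨e1 (n : ZMod M1), hv _⟩ := by
          rw [Subgraph.coe_adj]
          have : ((n+1 : ℕ) : ZMod M1) = (n : ZMod M1) + 1 := by push_cast; ring
          rw [this]
          exact F.adj_symm (hFadj1 _)
        exact hadj.reachable.trans ih
    have hsurj : Function.Surjective (fun _ : Fin 1 =>
        F.coe.connectedComponentMk ⟨e1 0, hv _⟩) := by
      intro cc
      induction cc using SimpleGraph.ConnectedComponent.ind with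
      | _ z =>
        obtain ⟨p, hp⟩ := cover z.1
        refine ⟨0, ?_⟩
        have : z = ⟨e1 p, hv _⟩ := Subtype.ext hp.symm
        rw [this]
        have hz : F.coe.Reachable ⟨e1 p, hv _⟩ ⟨e1 0, hv _⟩ := by
          have := hreach1 p.val
          rwa [ZMod.natCast_rightInverse p] at this
        exact (ConnectedComponent.sound hz).symm
    calc Nat.card F.coe.ConnectedComponent ≤ Nat.card (Fin 1) :=
          Nat.card_le_card_of_surjective _ hsurj
      _ ≤ 2 := by simp

end engine1

lemma zval_cast_inj {m : ℕ} {s t : ℕ} (hs : s < m) (ht : t < m) (h : (s : ZMod m) = t) : s = t := by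
  haveI : NeZero m := ⟨by omega⟩
  have := congrArg ZMod.val h
  rwa [ZMod.val_cast_of_lt hs, ZMod.val_cast_of_lt ht] at this

lemma val_sub_cases {m : ℕ} [NeZero m] (x y : ZMod m) :
    (x - y).val = if y.val ≤ x.val then x.val - y.val else x.val + m - y.val := by
  have hx : ((x.val : ℕ) : ZMod m) = x := ZMod.natCast_rightInverse x
  have hy : ((y.val : ℕ) : ZMod m) = y := ZMod.natCast_rightInverse y
  have hxlt := ZMod.val_lt x
  have hylt := ZMod.val_lt y
  rcases le_or_gt y.val x.val with h | h
  · rw [if_pos h]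
    have hxy : x - y = ((x.val - y.val : ℕ) : ZMod m) := by rw [Nat.cast_sub h, hx, hy]
    rw [hxy, ZMod.val_cast_of_lt (by omega)]
  · rw [if_neg (by omega)]
    have hxy : x - y = ((x.val + m - y.val : ℕ) : ZMod m) := by
      rw [Nat.cast_sub (by omega), Nat.cast_add, ZMod.natCast_self, hx, hy]
      ring
    rw [hxy, ZMod.val_cast_of_lt (by omega)]

section setup

variable [Fintype V] (G : SimpleGraph V) (k m : ℕ)

lemma mindeg (hk : 2 ≤ k) (horder : 3 * k + 3 ≤ Fintype.card V)
    (hconn : vertexConnectivity G = k) : ∀ v : V, k ≤ (G.neighborSet v).ncard := by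
  classical
  intro v
  by_contra hdeg
  push_neg at hdeg
  set S : Finset V := (G.neighborSet v).toFinset with hS
  have hcard : S.card = (G.neighborSet v).ncard := (Set.ncard_eq_toFinset_card' _).symm
  have hnotconn : ¬ (G.induce ((S : Set V)ᶜ)).Connected := by
    intro hC
    have hex : ∃ w : V, w ∉ insert v S := by
      by_contra hno
      push_neg at hno
      have hsub : (Finset.univ : Finset V) ⊆ insert v S := fun x _ => hno x
      have := Finset.card_le_card hsub
      have h2 := Finset.card_insert_le v S
      rw [Finset.card_univ] at this
      omega
    obtain ⟨w, hw⟩ := hex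
    have hvmem : v ∈ ((S : Set V))ᶜ := by
      simp only [Set.mem_compl_iff, Finset.coe_sort_coe, Finset.mem_coe, hS,
        Set.mem_toFinset, SimpleGraph.mem_neighborSet]
      exact G.irrefl
    have hwmem : w ∈ ((S : Set V))ᶜ := by
      simp only [Set.mem_compl_iff, Finset.mem_coe]
      exact fun hmem => hw (Finset.mem_insert_of_mem hmem)
    have hne : (⟨v, hvmem⟩ : ↥((S : Set V)ᶜ)) ≠ ⟨w, hwmem⟩ := by
      intro h
      have hvw : v = w := congrArg Subtype.val h
      apply hw
      rw [← hvw]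
      exact Finset.mem_insert_self _ _
    obtain ⟨p⟩ := hC.preconnected ⟨v, hvmem⟩ ⟨w, hwmem⟩
    cases p with
    | nil => exact hne rfl
    | cons h q =>
      rename_i b
      have hb : G.Adj v b.1 := by simpa [comap_adj] using h
      have : b.1 ∈ ((S : Set V))ᶜ := b.2
      apply this
      simp only [Finset.mem_coe, hS, Set.mem_toFinset, SimpleGraph.mem_neighborSet]
      exact hb
  have hmem : S.card ∈ {k' : ℕ | ∃ S' : Finset V, S'.card = k' ∧
      (¬ (G.induce ((S' : Set V)ᶜ)).Connected ∨ Fintype.card V ≤ S'.card + 1)} :=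
    ⟨S, rfl, Or.inl hnotconn⟩
  have := Nat.sInf_le hmem
  rw [← vertexConnectivity] at this
  omega

lemma indep_bound (hindep : _root_.indepNum G = k + 1) (s : Finset V)
    (hs : ∀ x ∈ s, ∀ y ∈ s, x ≠ y → ¬ G.Adj x y) : s.card ≤ k + 1 := by
  have hmem : s.card ∈ {n : ℕ | ∃ s' : Finset V,
      (∀ x ∈ s', ∀ y ∈ s', x ≠ y → ¬ G.Adj x y) ∧ s'.card = n} := ⟨s, hs, rfl⟩
  have hbdd : BddAbove {n : ℕ | ∃ s' : Finset V,
      (∀ x ∈ s', ∀ y ∈ s', x ≠ y → ¬ G.Adj x y) ∧ s'.card = n} := by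
    refine ⟨Fintype.card V, ?_⟩
    rintro n ⟨s', _, rfl⟩
    exact s'.card_le_univ
  have := le_csSup hbdd hmem
  rw [← _root_.indepNum] at this
  omega

end setup

section order

variable {k m : ℕ} (hk : 2 ≤ k) (hm : 3 ≤ m)
  (a : ZMod k → ZMod m) (hainj : Function.Injective a)
  (hord : ∀ i j : ZMod k, i.val < j.val → (a i).val < (a j).val)
  (t : ZMod k → ℕ) (ht : ∀ i : ZMod k, t i = (a (i + 1) - a i).val - 1)

include hk hm hainj ht in
lemma gap0 (r : ZMod k) : (a (r + 1) - a r).val = t r + 1 := by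
  haveI : NeZero k := ⟨by omega⟩
  haveI : NeZero m := ⟨by omega⟩
  haveI : Fact (1 < k) := ⟨by omega⟩
  have hne : a (r + 1) ≠ a r := by
    intro h
    have h2 := hainj h
    have h1 : (1 : ZMod k) = 0 := by linear_combination h2
    have := congrArg ZMod.val h1
    rw [ZMod.val_one, ZMod.val_zero] at this
    omega
  have hvne : (a (r + 1) - a r).val ≠ 0 := by
    intro h
    apply hne
    exact sub_eq_zero.mp ((ZMod.val_eq_zero _).mp h)
  have := ht r
  omega

include hk hm hainj hord ht in
lemma gap (r s : ZMod k) (hsr : s ≠ r) : t r + 1 ≤ (a s - a r).val := by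
  haveI : NeZero k := ⟨by omega⟩
  haveI : NeZero m := ⟨by omega⟩
  haveI : Fact (1 < k) := ⟨by omega⟩
  rw [← gap0 hk hm a hainj t ht r]
  have hvltk : ∀ x : ZMod k, x.val < k := fun x => ZMod.val_lt x
  have hvltm : ∀ x : ZMod m, x.val < m := fun x => ZMod.val_lt x
  have hvalinjk : ∀ x y : ZMod k, x.val = y.val → x = y := by
    intro x y h
    have := congrArg (Nat.cast : ℕ → ZMod k) h
    rwa [ZMod.natCast_rightInverse x, ZMod.natCast_rightInverse y] at this
  have h1k : (1 : ZMod k).val = 1 := ZMod.val_one k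
  have hadd : (r + 1).val = (r.val + 1) % k := by rw [ZMod.val_add, h1k]
  have hkr := hvltk r
  have hks := hvltk s
  rw [val_sub_cases, val_sub_cases]
  have hm1 := hvltm (a (r + 1))
  have hm2 := hvltm (a s)
  have hm3 := hvltm (a r)
  rcases Nat.lt_or_ge (r.val + 1) k with hrk | hrk
  · have hr1 : (r + 1).val = r.val + 1 := by rw [hadd, Nat.mod_eq_of_lt hrk]
    have hmono1 : (a r).val < (a (r + 1)).val := hord r (r + 1) (by omega)
    rcases lt_trichotomy s.val r.val with h | h | h
    · have hsa := hord s r h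
      split_ifs <;> omega
    · exact absurd (hvalinjk _ _ h) hsr
    · rcases eq_or_lt_of_le (by omega : r.val + 1 ≤ s.val) with he | hlt
      · have hs1 : s = r + 1 := hvalinjk _ _ (by omega)
        rw [hs1]
      · have h2 : (a (r + 1)).val < (a s).val := hord (r + 1) s (by omega)
        split_ifs <;> omega
  · have hrv : r.val + 1 = k := by omega
    have hr0 : (r + 1).val = 0 := by rw [hadd, hrv, Nat.mod_self]
    have h0le : (a (r + 1)).val ≤ (a s).val := by
      rcases Nat.eq_zero_or_pos s.val with h0 | h0
      · have hse : s = r + 1 := hvalinjk _ _ (by omega)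
        rw [hse]
      · exact le_of_lt (hord (r + 1) s (by omega))
    have hlt1 : (a (r + 1)).val < (a r).val := by
      refine hord _ _ ?_
      have := hvltk r
      omega
    have hsltr : s.val < r.val := by
      have h1 := hvltk s
      have h2 : s.val ≠ r.val := fun h => hsr (hvalinjk _ _ h)
      omega
    have hslt : (a s).val < (a r).val := hord s r hsltr
    split_ifs <;> omega

end order

section graphsetup

variable [Fintype V] {G : SimpleGraph V} {k m : ℕ}
  (hk : 2 ≤ k) (hm : 3 ≤ m)
  (horder : 3 * k + 3 ≤ Fintype.card V)
  (hconn : vertexConnectivity G = k)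
  {c : ZMod m → V} (hcinj : Function.Injective c)
  (hcadj : ∀ i : ZMod m, G.Adj (c i) (c (i + 1)))
  {H : Set V} (hH : H = (Set.range c)ᶜ)
  (hHne : H.Nonempty) (hHcard : H.ncard ≤ 2)
  (hHclique : ∀ x ∈ H, ∀ y ∈ H, x ≠ y → G.Adj x y)
  {a : ZMod k → ZMod m} (hainj : Function.Injective a)
  (hU : Set.range (fun i : ZMod k => c (a i)) =
      {v : V | v ∈ Set.range c ∧ ∃ x ∈ H, G.Adj x v})

include hU hcinj in
lemma notU (idx : ZMod m) (hridx : ∀ r : ZMod k, a r ≠ idx) :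
    ∀ z ∈ H, ¬ G.Adj z (c idx) := by
  intro z hz hadj
  have hmem : c idx ∈ {v : V | v ∈ Set.range c ∧ ∃ x ∈ H, G.Adj x v} :=
    ⟨⟨idx, rfl⟩, z, hz, hadj⟩
  rw [← hU] at hmem
  obtain ⟨r, hr⟩ := hmem
  exact hridx r (hcinj hr)

include hU in
lemma uadj (r : ZMod k) : ∃ z ∈ H, G.Adj z (c (a r)) := by
  have hmem : c (a r) ∈ Set.range (fun i : ZMod k => c (a i)) := ⟨r, rfl⟩
  rw [hU] at hmem
  exact hmem.2

include hH in
lemma hnotc : ∀ z ∈ H, ∀ idx : ZMod m, c idx ≠ z := by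
  intro z hz idx h
  rw [hH] at hz
  exact hz ⟨idx, h⟩

include hk hm horder hconn hcinj hH hHne hHcard hHclique hainj hU in
lemma hpath (p q : ZMod k) (hpq : p ≠ q) :
    ∃ (hl : ℕ) (w : ℕ → V), (hl = 1 ∨ hl = 2) ∧ (∀ s, s < hl → w s ∈ H) ∧
      (∀ z ∈ H, ∃ s, s < hl ∧ w s = z) ∧
      (∀ s s', s < hl → s' < hl → w s = w s' → s = s') ∧
      G.Adj (c (a p)) (w 0) ∧ G.Adj (w (hl - 1)) (c (a q)) ∧
      (∀ s, s + 1 < hl → G.Adj (w s) (w (s + 1))) := by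
  classical
  haveI : NeZero k := ⟨by omega⟩
  obtain ⟨x, hx⟩ := hHne
  by_cases hy : ∃ y ∈ H, y ≠ x
  · obtain ⟨y, hyH, hyx⟩ := hy
    have hxy_eq : ({x, y} : Set V) = H := by
      refine Set.eq_of_subset_of_ncard_le ?_ ?_ (Set.toFinite _)
      · rintro z (rfl | rfl)
        exacts [hx, hyH]
      · rw [Set.ncard_pair (Ne.symm hyx)]
        exact hHcard
    have hmd := mindeg G k hk horder hconn
    have hclaim : ∀ z z' : V, ({z, z'} : Set V) = H →
        ∀ r s : ZMod k, r ≠ s → G.Adj z (c (a r)) ∨ G.Adj z (c (a s)) := by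
      intro z z' hzz r s hrs
      by_contra hno
      push_neg at hno
      set Uset : Set V := Set.range (fun i : ZMod k => c (a i)) with hUset
      have hzH : z ∈ H := by rw [← hzz]; exact Or.inl rfl
      have hsub : G.neighborSet z ∪ {c (a r), c (a s)} ⊆ insert z' Uset := by
        rintro v (hv | hv)
        · rw [SimpleGraph.mem_neighborSet] at hv
          by_cases hvH : v ∈ H
          · rw [← hzz] at hvH
            rcases hvH with rfl | rfl
            · exact absurd hv (G.irrefl)
            · exact Set.mem_insert _ _
          · refine Set.mem_insert_of_mem _ ?_
            rw [hU]
            refine ⟨?_, z, hzH, hv⟩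
            rw [hH] at hvH
            simpa using hvH
        · rcases hv with rfl | rfl
          · exact Set.mem_insert_of_mem _ ⟨r, rfl⟩
          · exact Set.mem_insert_of_mem _ ⟨s, rfl⟩
      have hdisj : Disjoint (G.neighborSet z) ({c (a r), c (a s)} : Set V) := by
        rw [Set.disjoint_left]
        rintro v hvN (rfl | rfl)
        · exact hno.1 hvN
        · exact hno.2 hvN
      have hrsne : c (a r) ≠ c (a s) := fun h => hrs (hainj (hcinj h))
      have hcard2 : (G.neighborSet z ∪ {c (a r), c (a s)}).ncard =
          (G.neighborSet z).ncard + 2 := by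
        rw [Set.ncard_union_eq hdisj (Set.toFinite _) (Set.toFinite _), Set.ncard_pair hrsne]
      have hUcard : Uset.ncard = k := by
        have hUim : Uset = ↑(Finset.univ.image (fun i : ZMod k => c (a i))) := by
          rw [Finset.coe_image, Finset.coe_univ, Set.image_univ]
        have hinj2 : Function.Injective (fun i : ZMod k => c (a i)) :=
          fun u v h => hainj (hcinj h)
        rw [hUim, Set.ncard_coe_finset, Finset.card_image_of_injective _ hinj2,
          Finset.card_univ, ZMod.card]
      have hins : (insert z' Uset).ncard ≤ k + 1 := by
        have := Set.ncard_insert_le z' Uset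
        omega
      have hle := Set.ncard_le_ncard hsub (Set.toFinite _)
      have := hmd z
      omega
    have huxy : ∀ r : ZMod k, G.Adj x (c (a r)) ∨ G.Adj y (c (a r)) := by
      intro r
      obtain ⟨z, hzH, hadj⟩ := uadj hU r
      rw [← hxy_eq] at hzH
      rcases hzH with rfl | rfl
      · exact Or.inl hadj
      · exact Or.inr hadj
    have hyx_eq : ({y, x} : Set V) = H := by rw [← hxy_eq]; exact Set.pair_comm y x
    have hcx := hclaim x y hxy_eq p q hpq
    have hcy := hclaim y x hyx_eq p q hpq
    have hup := huxy p
    have huq := huxy q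
    have hxyadj : G.Adj x y := hHclique x hx y hyH (Ne.symm hyx)
    have hmain : (G.Adj x (c (a p)) ∧ G.Adj y (c (a q))) ∨
        (G.Adj y (c (a p)) ∧ G.Adj x (c (a q))) := by tauto
    have hcov : ∀ z ∈ H, z = x ∨ z = y := by
      intro z hz
      rw [← hxy_eq] at hz
      rcases hz with rfl | rfl
      · exact Or.inl rfl
      · exact Or.inr rfl
    rcases hmain with ⟨h1, h2⟩ | ⟨h1, h2⟩
    · refine ⟨2, fun s => if s = 0 then x else y, Or.inr rfl, ?_, ?_, ?_, ?_, ?_, ?_⟩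
      · intro s _
        by_cases h : s = 0 <;> simp [h, hx, hyH]
      · intro z hz
        rcases hcov z hz with rfl | rfl
        · exact ⟨0, by omega, by simp⟩
        · exact ⟨1, by omega, by simp⟩
      · intro s s' hs hs' hss
        have h00 : (if (0:ℕ) = 0 then x else y) = x := if_pos rfl
        have h11 : (if (1:ℕ) = 0 then x else y) = y := if_neg (by omega)
        rcases (by omega : s = 0 ∨ s = 1) with rfl | rfl <;>
          rcases (by omega : s' = 0 ∨ s' = 1) with rfl | rfl
        · rfl
        · exact absurd (show x = y by simpa using hss) (Ne.symm hyx)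
        · exact absurd (show y = x by simpa using hss) hyx
        · rfl
      · simpa using h1.symm
      · simpa using h2
      · intro s hs
        have hs0 : s = 0 := by omega
        subst hs0
        simpa using hxyadj
    · refine ⟨2, fun s => if s = 0 then y else x, Or.inr rfl, ?_, ?_, ?_, ?_, ?_, ?_⟩
      · intro s _
        by_cases h : s = 0 <;> simp [h, hx, hyH]
      · intro z hz
        rcases hcov z hz with rfl | rfl
        · exact ⟨1, by omega, by simp⟩
        · exact ⟨0, by omega, by simp⟩
      · intro s s' hs hs' hss
        have h00 : (if (0:ℕ) = 0 then y else x) = y := if_pos rfl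
        have h11 : (if (1:ℕ) = 0 then y else x) = x := if_neg (by omega)
        rcases (by omega : s = 0 ∨ s = 1) with rfl | rfl <;>
          rcases (by omega : s' = 0 ∨ s' = 1) with rfl | rfl
        · rfl
        · exact absurd (show y = x by simpa using hss) hyx
        · exact absurd (show x = y by simpa using hss) (Ne.symm hyx)
        · rfl
      · simpa using h1.symm
      · simpa using h2
      · intro s hs
        have hs0 : s = 0 := by omega
        subst hs0
        simpa using hxyadj.symm
  · push_neg at hy
    have hH1 : ∀ z ∈ H, z = x := hy
    refine ⟨1, fun _ => x, Or.inl rfl, fun s _ => hx, fun z hz => ⟨0, by omega, (hH1 z hz).symm⟩,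
      fun s s' hs hs' _ => by omega, ?_, ?_, fun s hs => by omega⟩
    · obtain ⟨z, hzH, hadj⟩ := uadj hU p
      rw [hH1 z hzH] at hadj
      exact hadj.symm
    · obtain ⟨z, hzH, hadj⟩ := uadj hU q
      rw [hH1 z hzH] at hadj
      exact hadj

end graphsetup


lemma sub_val_add {M : ℕ} [NeZero M] (u v : ZMod M) (h : u ≠ v) : (u - v).val + (v - u).val = M := by
  have h1 : u.val ≠ v.val := fun hh => h (zmod_val_inj hh)
  have h2 := ZMod.val_lt u
  have h3 := ZMod.val_lt v
  rw [val_sub_cases, val_sub_cases]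
  split_ifs <;> omega


section apps

variable [Fintype V] {G : SimpleGraph V} {k m : ℕ}
  (hk : 2 ≤ k) (hm : 3 ≤ m)
  (horder : 3 * k + 3 ≤ Fintype.card V)
  (hconn : vertexConnectivity G = k)
  {c : ZMod m → V} (hcinj : Function.Injective c)
  (hcadj : ∀ i : ZMod m, G.Adj (c i) (c (i + 1)))
  {H : Set V} (hH : H = (Set.range c)ᶜ)
  (hHne : H.Nonempty) (hHcard : H.ncard ≤ 2)
  (hHclique : ∀ x ∈ H, ∀ y ∈ H, x ≠ y → G.Adj x y)
  {a : ZMod k → ZMod m} (hainj : Function.Injective a)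
  (hU : Set.range (fun i : ZMod k => c (a i)) =
      {v : V | v ∈ Set.range c ∧ ∃ x ∈ H, G.Adj x v})

include hk hm horder hconn hcinj hcadj hH hHne hHcard hHclique hainj hU in
lemma app1 (hno2f : ¬ HasTwoFactorAtMostTwo G) (j j' : ZMod k) (hjj : j ≠ j')
    (hedge : G.Adj (c (a j - 1)) (c (a j' - 1))) : False := by
  haveI : NeZero k := ⟨by omega⟩
  haveI : NeZero m := ⟨by omega⟩
  obtain ⟨hl, w, hhl, hwH, hwcov, hwinj, hwp, hwq, hwchain⟩ :=
    hpath hk hm horder hconn hcinj hH hHne hHcard hHclique hainj hU j' j (Ne.symm hjj)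
  set E : ℕ := (a j' - a j).val with hE
  have hElt : E < m := ZMod.val_lt _
  have hEne : a j' ≠ a j := fun h => hjj (hainj h).symm
  have hE1 : 1 ≤ E := by
    rcases Nat.eq_zero_or_pos E with h0 | h0
    · exact absurd (sub_eq_zero.mp ((ZMod.val_eq_zero _).mp h0)) hEne
    · exact h0
  have hl1 : 1 ≤ hl := by rcases hhl with rfl | rfl <;> omega
  set M : ℕ := m + hl with hM
  have hM3 : 3 ≤ M := by omega
  haveI : NeZero M := ⟨by omega⟩
  set cc : ℕ → V := fun o => c (a j + (o : ℕ)) with hcc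
  have ccadj : ∀ o : ℕ, G.Adj (cc o) (cc (o + 1)) := by
    intro o
    have h1 : a j + ((o + 1 : ℕ) : ZMod m) = (a j + (o : ℕ)) + 1 := by push_cast; ring
    simp only [hcc]
    rw [h1]
    exact hcadj _
  have ccinj : ∀ o1 o2, o1 < m → o2 < m → cc o1 = cc o2 → o1 = o2 := by
    intro o1 o2 ho1 ho2 h
    simp only [hcc] at h
    exact zval_cast_inj ho1 ho2 (add_left_cancel (hcinj h))
  have ccnw : ∀ (o : ℕ) (s : ℕ), s < hl → cc o ≠ w s := by
    intro o s hs
    simp only [hcc]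
    exact hnotc hH (w s) (hwH s hs) _
  have hccE : cc E = c (a j') := by
    simp only [hcc]
    congr 1
    rw [hE, ZMod.natCast_rightInverse (a j' - a j)]
    ring
  have hccE1 : cc (E - 1) = c (a j' - 1) := by
    simp only [hcc]
    congr 1
    rw [Nat.cast_sub hE1, hE, ZMod.natCast_rightInverse (a j' - a j)]
    push_cast
    ring
  have hccm1 : cc (m - 1) = c (a j - 1) := by
    simp only [hcc]
    congr 1
    rw [Nat.cast_sub (by omega : 1 ≤ m), ZMod.natCast_self]
    push_cast
    ring
  have hcc0 : cc 0 = c (a j) := by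
    simp only [hcc]
    congr 1
    rw [Nat.cast_zero, add_zero]
  set E2V : ℕ → V := fun q => if q < E then cc q else if q < m then cc (m - 1 - (q - E)) else w (q - m)
    with hE2V
  have E2Vinj : ∀ q1 q2, q1 < M → q2 < M → E2V q1 = E2V q2 → q1 = q2 := by
    intro q1 q2 h1 h2 h
    simp only [hE2V] at h
    by_cases c1 : q1 < E <;> by_cases c2 : q2 < E
    · rw [if_pos c1, if_pos c2] at h
      exact ccinj _ _ (by omega) (by omega) h
    · rw [if_pos c1, if_neg c2] at h
      by_cases c3 : q2 < m
      · rw [if_pos c3] at h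
        have := ccinj _ _ (by omega) (by omega) h
        omega
      · rw [if_neg c3] at h
        exact absurd h (ccnw _ _ (by omega))
    · rw [if_neg c1, if_pos c2] at h
      by_cases c3 : q1 < m
      · rw [if_pos c3] at h
        have := ccinj _ _ (by omega) (by omega) h
        omega
      · rw [if_neg c3] at h
        exact absurd h.symm (ccnw _ _ (by omega))
    · rw [if_neg c1, if_neg c2] at h
      by_cases c3 : q1 < m <;> by_cases c4 : q2 < m
      · rw [if_pos c3, if_pos c4] at h
        have := ccinj _ _ (by omega) (by omega) h
        omega
      · rw [if_pos c3, if_neg c4] at h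
        exact absurd h (ccnw _ _ (by omega))
      · rw [if_neg c3, if_pos c4] at h
        exact absurd h.symm (ccnw _ _ (by omega))
      · rw [if_neg c3, if_neg c4] at h
        have := hwinj _ _ (by omega) (by omega) h
        omega
  apply hno2f
  refine engine1 (G := G) (M1 := M) hM3 (fun p => E2V p.val) ?_ ?_ ?_
  · intro p1 p2 h
    exact zmod_val_inj (E2Vinj p1.val p2.val (ZMod.val_lt p1) (ZMod.val_lt p2) h)
  · intro p
    have hqlt : p.val < M := ZMod.val_lt p
    have hsucc := val_succ (by omega : 1 < M) p
    simp only [hE2V]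
    by_cases hwrap : p.val + 1 = M
    · have hv1 : (p + 1).val = 0 := by rw [hsucc, hwrap, Nat.mod_self]
      rw [hv1]
      rw [if_neg (by omega), if_neg (by omega), if_pos (by omega)]
      have : p.val - m = hl - 1 := by omega
      rw [this, hcc0]
      exact hwq
    · have hv1 : (p + 1).val = p.val + 1 := by rw [hsucc, Nat.mod_eq_of_lt (by omega)]
      rw [hv1]
      by_cases c1 : p.val + 1 < E
      · rw [if_pos (by omega), if_pos c1]
        exact ccadj _
      · by_cases c2 : p.val + 1 = E
        · rw [if_pos (by omega), if_neg (by omega), if_pos (by omega)]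
          have h1 : p.val = E - 1 := by omega
          have h2 : m - 1 - (p.val + 1 - E) = m - 1 := by omega
          rw [h2, h1, hccE1, hccm1]
          exact hedge.symm
        · by_cases c3 : p.val + 1 < m
          · rw [if_neg (by omega), if_pos (by omega), if_neg (by omega), if_pos c3]
            have h1 : m - 1 - (p.val - E) = (m - 1 - (p.val + 1 - E)) + 1 := by omega
            rw [h1]
            exact (ccadj _).symm
          · by_cases c4 : p.val + 1 = m
            · rw [if_neg (by omega), if_pos (by omega), if_neg (by omega), if_neg (by omega)]
              have h1 : m - 1 - (p.val - E) = E := by omega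
              have h2 : p.val + 1 - m = 0 := by omega
              rw [h1, h2, hccE]
              exact hwp
            · rw [if_neg (by omega), if_neg (by omega), if_neg (by omega), if_neg (by omega)]
              have h1 : p.val + 1 - m = (p.val - m) + 1 := by omega
              rw [h1]
              exact hwchain _ (by omega)
  · intro v
    by_cases hvH : v ∈ H
    · obtain ⟨s, hs, hws⟩ := hwcov v hvH
      refine ⟨((m + s : ℕ) : ZMod M), ?_⟩
      have hval : ((m + s : ℕ) : ZMod M).val = m + s := ZMod.val_cast_of_lt (by omega)
      simp only [hE2V, hval]
      rw [if_neg (by omega), if_neg (by omega)]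
      have : m + s - m = s := by omega
      rw [this]
      exact hws
    · have hvc : v ∈ Set.range c := by
        by_contra hvc
        exact hvH (hH ▸ hvc)
      obtain ⟨idx, rfl⟩ := hvc
      have hoeq : cc ((idx - a j).val) = c idx := by
        simp only [hcc]
        congr 1
        rw [ZMod.natCast_rightInverse (idx - a j)]
        ring
      have ho : (idx - a j).val < m := ZMod.val_lt _
      by_cases hoE : (idx - a j).val < E
      · refine ⟨(((idx - a j).val : ℕ) : ZMod M), ?_⟩
        have hval : (((idx - a j).val : ℕ) : ZMod M).val = (idx - a j).val :=
          ZMod.val_cast_of_lt (by omega)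
        simp only [hE2V, hval]
        rw [if_pos hoE]
        exact hoeq
      · refine ⟨((E + (m - 1 - (idx - a j).val) : ℕ) : ZMod M), ?_⟩
        have hval : ((E + (m - 1 - (idx - a j).val) : ℕ) : ZMod M).val
            = E + (m - 1 - (idx - a j).val) := ZMod.val_cast_of_lt (by omega)
        simp only [hE2V, hval]
        rw [if_neg (by omega), if_pos (by omega)]
        have : m - 1 - (E + (m - 1 - (idx - a j).val) - E) = (idx - a j).val := by omega
        rw [this]
        exact hoeq

include hk hm horder hconn hcinj hcadj hH hHne hHcard hHclique hainj hU in
lemma app2 (hno2f : ¬ HasTwoFactorAtMostTwo G) (i j : ZMod k) (hij : j ≠ i) (l : ℕ)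
    (hl1 : 1 ≤ l) (hts : l + 3 ≤ (a j - a i).val)
    (hchord : G.Adj (c (a i - 1)) (c (a i + ((l - 1 : ℕ) : ZMod m))))
    (hedge : G.Adj (c (a i + ((l : ℕ) : ZMod m))) (c (a j - 1))) : False := by
  haveI : NeZero k := ⟨by omega⟩
  haveI : NeZero m := ⟨by omega⟩
  obtain ⟨hl, w, hhl, hwH, hwcov, hwinj, hwp, hwq, hwchain⟩ :=
    hpath hk hm horder hconn hcinj hH hHne hHcard hHclique hainj hU j i hij
  have haij : a i ≠ a j := fun h => hij (hainj h).symm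
  set D : ℕ := (a i - a j).val with hD
  set Ej : ℕ := (a j - a i).val with hEj
  have hDE : D + Ej = m := sub_val_add (a i) (a j) haij
  have hD1 : 1 ≤ D := by
    rcases Nat.eq_zero_or_pos D with h0 | h0
    · exact absurd (sub_eq_zero.mp ((ZMod.val_eq_zero _).mp h0)) haij
    · exact h0
  have hl1' : 1 ≤ hl := by rcases hhl with rfl | rfl <;> omega
  set M1 : ℕ := Ej - l with hM1
  set M2 : ℕ := l + D + hl with hM2
  have hM13 : 3 ≤ M1 := by omega
  have hM23 : 3 ≤ M2 := by omega
  haveI : NeZero M1 := ⟨by omega⟩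
  haveI : NeZero M2 := ⟨by omega⟩
  set cc : ℕ → V := fun o => c (a j + (o : ℕ)) with hcc
  have ccadj : ∀ o : ℕ, G.Adj (cc o) (cc (o + 1)) := by
    intro o
    have h1 : a j + ((o + 1 : ℕ) : ZMod m) = (a j + (o : ℕ)) + 1 := by push_cast; ring
    simp only [hcc]
    rw [h1]
    exact hcadj _
  have ccinj : ∀ o1 o2, o1 < m → o2 < m → cc o1 = cc o2 → o1 = o2 := by
    intro o1 o2 ho1 ho2 h
    simp only [hcc] at h
    exact zval_cast_inj ho1 ho2 (add_left_cancel (hcinj h))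
  have ccnw : ∀ (o : ℕ) (s : ℕ), s < hl → cc o ≠ w s := by
    intro o s hs
    simp only [hcc]
    exact hnotc hH (w s) (hwH s hs) _
  have hADD : ∀ s : ℕ, cc (D + s) = c (a i + (s : ℕ)) := by
    intro s
    simp only [hcc]
    congr 1
    push_cast
    rw [hD, ZMod.natCast_rightInverse (a i - a j)]
    ring
  have hccD : cc D = c (a i) := by
    have := hADD 0
    rwa [Nat.add_zero, Nat.cast_zero, add_zero] at this
  have hccD1 : cc (D - 1) = c (a i - 1) := by
    simp only [hcc]
    congr 1
    rw [Nat.cast_sub hD1, hD, ZMod.natCast_rightInverse (a i - a j)]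
    push_cast
    ring
  have hccm1 : cc (m - 1) = c (a j - 1) := by
    simp only [hcc]
    congr 1
    rw [Nat.cast_sub (by omega : 1 ≤ m), ZMod.natCast_self]
    push_cast
    ring
  have hcc0 : cc 0 = c (a j) := by
    simp only [hcc]
    congr 1
    rw [Nat.cast_zero, add_zero]
  set E2 : ℕ → V := fun q => if q < l then cc (D + q)
      else if q < l + D then cc (D - 1 - (q - l)) else w (q - (l + D)) with hE2
  apply hno2f
  refine engine2 (G := G) (M1 := M1) (M2 := M2) hM13 hM23
    (fun p => cc (D + l + p.val)) (fun p => E2 p.val) ?_ ?_ ?_ ?_ ?_ ?_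
  · -- inj e1
    intro p1 p2 h
    have h1 := ZMod.val_lt p1
    have h2 := ZMod.val_lt p2
    have := ccinj _ _ (by omega) (by omega) h
    exact zmod_val_inj (by omega)
  · -- inj e2
    intro p1 p2 h
    have hb1 := ZMod.val_lt p1
    have hb2 := ZMod.val_lt p2
    simp only [hE2] at h
    have key : p1.val = p2.val := by
      by_cases c1 : p1.val < l <;> by_cases c2 : p2.val < l
      · rw [if_pos c1, if_pos c2] at h
        have := ccinj _ _ (by omega) (by omega) h
        omega
      · rw [if_pos c1, if_neg c2] at h
        by_cases c3 : p2.val < l + D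
        · rw [if_pos c3] at h
          have := ccinj _ _ (by omega) (by omega) h
          omega
        · rw [if_neg c3] at h
          exact absurd h (ccnw _ _ (by omega))
      · rw [if_neg c1, if_pos c2] at h
        by_cases c3 : p1.val < l + D
        · rw [if_pos c3] at h
          have := ccinj _ _ (by omega) (by omega) h
          omega
        · rw [if_neg c3] at h
          exact absurd h.symm (ccnw _ _ (by omega))
      · rw [if_neg c1, if_neg c2] at h
        by_cases c3 : p1.val < l + D <;> by_cases c4 : p2.val < l + D
        · rw [if_pos c3, if_pos c4] at h
          have := ccinj _ _ (by omega) (by omega) h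
          omega
        · rw [if_pos c3, if_neg c4] at h
          exact absurd h (ccnw _ _ (by omega))
        · rw [if_neg c3, if_pos c4] at h
          exact absurd h.symm (ccnw _ _ (by omega))
        · rw [if_neg c3, if_neg c4] at h
          have := hwinj _ _ (by omega) (by omega) h
          omega
    exact zmod_val_inj key
  · -- adj e1
    intro p
    show G.Adj (cc (D + l + p.val)) (cc (D + l + (p + 1).val))
    have hqlt : p.val < M1 := ZMod.val_lt p
    have hsucc := val_succ (by omega : 1 < M1) p
    by_cases hwrap : p.val + 1 = M1
    · have hv1 : (p + 1).val = 0 := by rw [hsucc, hwrap, Nat.mod_self]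
      rw [hv1]
      have h1 : D + l + p.val = m - 1 := by omega
      rw [h1, Nat.add_zero, hccm1]
      have h2 : cc (D + l) = c (a i + ((l : ℕ) : ZMod m)) := hADD l
      rw [h2]
      exact hedge.symm
    · have hv1 : (p + 1).val = p.val + 1 := by rw [hsucc, Nat.mod_eq_of_lt (by omega)]
      rw [hv1]
      have h1 : D + l + (p.val + 1) = (D + l + p.val) + 1 := by omega
      rw [h1]
      exact ccadj _
  · -- adj e2
    intro p
    have hqlt : p.val < M2 := ZMod.val_lt p
    have hsucc := val_succ (by omega : 1 < M2) p
    simp only [hE2]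
    by_cases hwrap : p.val + 1 = M2
    · have hv1 : (p + 1).val = 0 := by rw [hsucc, hwrap, Nat.mod_self]
      rw [hv1]
      rw [if_neg (by omega), if_neg (by omega), if_pos (by omega)]
      have h1 : p.val - (l + D) = hl - 1 := by omega
      have h2 : D + 0 = D := by omega
      rw [h1, h2, hccD]
      exact hwq
    · have hv1 : (p + 1).val = p.val + 1 := by rw [hsucc, Nat.mod_eq_of_lt (by omega)]
      rw [hv1]
      by_cases c1 : p.val + 1 < l
      · rw [if_pos (by omega), if_pos c1]
        have h1 : D + (p.val + 1) = (D + p.val) + 1 := by omega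
        rw [h1]
        exact ccadj _
      · by_cases c2 : p.val + 1 = l
        · rw [if_pos (by omega), if_neg (by omega), if_pos (by omega)]
          have h1 : D - 1 - (p.val + 1 - l) = D - 1 := by omega
          have h2 : p.val = l - 1 := by omega
          rw [h1, h2, hccD1]
          have h3 : cc (D + (l - 1)) = c (a i + ((l - 1 : ℕ) : ZMod m)) := hADD (l - 1)
          rw [h3]
          exact hchord.symm
        · by_cases c3 : p.val + 1 < l + D
          · rw [if_neg (by omega), if_pos (by omega), if_neg (by omega), if_pos c3]
            have h1 : D - 1 - (p.val - l) = (D - 1 - (p.val + 1 - l)) + 1 := by omega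
            rw [h1]
            exact (ccadj _).symm
          · by_cases c4 : p.val + 1 = l + D
            · rw [if_neg (by omega), if_pos (by omega), if_neg (by omega), if_neg (by omega)]
              have h1 : D - 1 - (p.val - l) = 0 := by omega
              have h2 : p.val + 1 - (l + D) = 0 := by omega
              rw [h1, h2, hcc0]
              exact hwp
            · rw [if_neg (by omega), if_neg (by omega), if_neg (by omega), if_neg (by omega)]
              have h1 : p.val + 1 - (l + D) = (p.val - (l + D)) + 1 := by omega
              rw [h1]
              exact hwchain _ (by omega)
  · -- disj
    intro p q
    have hb1 := ZMod.val_lt p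
    have hb2 := ZMod.val_lt q
    simp only [hE2]
    by_cases c1 : q.val < l
    · rw [if_pos c1]
      intro h
      have := ccinj _ _ (by omega) (by omega) h
      omega
    · by_cases c2 : q.val < l + D
      · rw [if_neg c1, if_pos c2]
        intro h
        have := ccinj _ _ (by omega) (by omega) h
        omega
      · rw [if_neg c1, if_neg c2]
        exact ccnw _ _ (by omega)
  · -- cover
    intro v
    by_cases hvH : v ∈ H
    · obtain ⟨s, hs, hws⟩ := hwcov v hvH
      refine Or.inr ⟨((l + D + s : ℕ) : ZMod M2), ?_⟩
      have hval : ((l + D + s : ℕ) : ZMod M2).val = l + D + s := ZMod.val_cast_of_lt (by omega)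
      simp only [hE2, hval]
      rw [if_neg (by omega), if_neg (by omega)]
      have h1 : l + D + s - (l + D) = s := by omega
      rw [h1]
      exact hws
    · have hvc : v ∈ Set.range c := by
        by_contra hvc
        exact hvH (hH ▸ hvc)
      obtain ⟨idx, rfl⟩ := hvc
      have hoeq : cc ((idx - a j).val) = c idx := by
        simp only [hcc]
        congr 1
        rw [ZMod.natCast_rightInverse (idx - a j)]
        ring
      have ho : (idx - a j).val < m := ZMod.val_lt _
      by_cases h1 : (idx - a j).val < D
      · refine Or.inr ⟨((l + (D - 1 - (idx - a j).val) : ℕ) : ZMod M2), ?_⟩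
        have hval : ((l + (D - 1 - (idx - a j).val) : ℕ) : ZMod M2).val
            = l + (D - 1 - (idx - a j).val) := ZMod.val_cast_of_lt (by omega)
        simp only [hE2, hval]
        rw [if_neg (by omega), if_pos (by omega)]
        have h2 : D - 1 - (l + (D - 1 - (idx - a j).val) - l) = (idx - a j).val := by omega
        rw [h2]
        exact hoeq
      · by_cases h2 : (idx - a j).val < D + l
        · refine Or.inr ⟨(((idx - a j).val - D : ℕ) : ZMod M2), ?_⟩
          have hval : (((idx - a j).val - D : ℕ) : ZMod M2).val = (idx - a j).val - D :=
            ZMod.val_cast_of_lt (by omega)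
          simp only [hE2, hval]
          rw [if_pos (by omega)]
          have h3 : D + ((idx - a j).val - D) = (idx - a j).val := by omega
          rw [h3]
          exact hoeq
        · refine Or.inl ⟨(((idx - a j).val - (D + l) : ℕ) : ZMod M1), ?_⟩
          show cc (D + l + (((idx - a j).val - (D + l) : ℕ) : ZMod M1).val) = c idx
          have hval : (((idx - a j).val - (D + l) : ℕ) : ZMod M1).val
              = (idx - a j).val - (D + l) := ZMod.val_cast_of_lt (by omega)
          rw [hval]
          have h3 : D + l + ((idx - a j).val - (D + l)) = (idx - a j).val := by omega
          rw [h3]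
          exact hoeq


end apps

theorem statement12 [Fintype V] (G : SimpleGraph V) (k m : ℕ) (hk : 2 ≤ k) (hm : 3 ≤ m)
    (horder : 3 * k + 3 ≤ Fintype.card V)
    (hconn : vertexConnectivity G = k)
    (hindep : _root_.indepNum G = k + 1)
    (hno2f : ¬ HasTwoFactorAtMostTwo G)
    -- `C` is a longest cycle of `G`, given with a fixed orientation as an injective
    -- cyclic enumeration `c` of its vertices, consecutive vertices being adjacent
    (c : ZMod m → V) (hcinj : Function.Injective c)
    (hcadj : ∀ i : ZMod m, G.Adj (c i) (c (i + 1)))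
    (hlongest : ∀ (v : V) (w : G.Walk v v), w.IsCycle → w.length ≤ m)
    -- `H` is the unique connected component of `G - V(C)`: it is all of `V \\ V(C)`,
    -- is a complete graph, and has at most two vertices
    (H : Set V) (hH : H = (Set.range c)ᶜ)
    (hHne : H.Nonempty) (hHcard : H.ncard ≤ 2)
    (hHclique : ∀ x ∈ H, ∀ y ∈ H, x ≠ y → G.Adj x y)
    -- `u i = c (a i)` are the `k` neighbours of `V(H)` on `C`, labelled in cyclic order
    (a : ZMod k → ZMod m) (hainj : Function.Injective a)
    (hU : Set.range (fun i : ZMod k => c (a i)) =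
      {v : V | v ∈ Set.range c ∧ ∃ x ∈ H, G.Adj x v})
    (hord : ∀ i j : ZMod k, i.val < j.val → (a i).val < (a j).val)
    -- `t i` is the number of vertices of `C` strictly between `u i` and `u (i+1)`
    (t : ZMod k → ℕ) (ht : ∀ i : ZMod k, t i = (a (i + 1) - a i).val - 1)
    (ht1 : ∀ i : ZMod k, 1 ≤ t i) :
    ∀ i : ZMod k, 5 ≤ t i → ∀ l : ℕ, 3 ≤ l → l ≤ t i - 2 →
      G.Adj (c (a i - 1)) (c (a i + (l : ZMod m))) := by
  intro i hti l hl3 hlle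
  haveI : NeZero k := ⟨by omega⟩
  haveI : NeZero m := ⟨by omega⟩
  suffices hmain : ∀ l' : ℕ, 1 ≤ l' → l' ≤ t i - 2 →
      G.Adj (c (a i - 1)) (c (a i + (l' : ZMod m))) by
    exact hmain l (by omega) hlle
  have htim : t i + 1 < m := by
    have h1 : (a (i + 1) - a i).val = t i + 1 := gap0 hk hm a hainj t ht i
    have h2 : (a (i + 1) - a i).val < m := ZMod.val_lt _
    omega
  intro l'
  induction l' with
  | zero => intro h1 _; omega
  | succ n ih =>
    intro _ hle
    have hchord : G.Adj (c (a i - 1)) (c (a i + ((n + 1 - 1 : ℕ) : ZMod m))) := by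
      have hn1 : n + 1 - 1 = n := by omega
      rw [hn1]
      rcases Nat.eq_zero_or_pos n with rfl | hn
      · have := hcadj (a i - 1)
        have h2 : a i - 1 + 1 = a i + ((0 : ℕ) : ZMod m) := by push_cast; ring
        rwa [h2] at this
      · exact ih (by omega) (by omega)
    have hLm : (n + 1) + 1 < m := by omega
    -- non-u facts
    have hne_v : ∀ r : ZMod k, a r ≠ a i + ((n + 1 : ℕ) : ZMod m) := by
      intro r h
      by_cases hr : r = i
      · subst hr
        have h2 : ((n + 1 : ℕ) : ZMod m) = 0 := by push_cast at h ⊢; linear_combination -h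
        have := congrArg ZMod.val h2
        rw [ZMod.val_cast_of_lt (by omega), ZMod.val_zero] at this
        omega
      · have h2 : a r - a i = ((n + 1 : ℕ) : ZMod m) := by rw [h]; ring
        have h3 := congrArg ZMod.val h2
        rw [ZMod.val_cast_of_lt (by omega)] at h3
        have h4 := gap hk hm a hainj hord t ht i r hr
        omega
    have hne_um_v : ∀ r : ZMod k, a r - 1 ≠ a i + ((n + 1 : ℕ) : ZMod m) := by
      intro r h
      by_cases hr : r = i
      · subst hr
        have h2 : ((n + 2 : ℕ) : ZMod m) = 0 := by push_cast at h ⊢; linear_combination -h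
        have := congrArg ZMod.val h2
        rw [ZMod.val_cast_of_lt (by omega), ZMod.val_zero] at this
        omega
      · have h2 : a r - a i = ((n + 2 : ℕ) : ZMod m) := by
          push_cast at h ⊢
          linear_combination h
        have h3 := congrArg ZMod.val h2
        rw [ZMod.val_cast_of_lt (by omega)] at h3
        have h4 := gap hk hm a hainj hord t ht i r hr
        omega
    have hne_um : ∀ r r' : ZMod k, a r' ≠ a r - 1 := by
      intro r r' h
      by_cases hr : r' = r
      · subst hr
        have h2 : ((1 : ℕ) : ZMod m) = 0 := by push_cast; linear_combination h
        have := congrArg ZMod.val h2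
        rw [ZMod.val_cast_of_lt (by omega), ZMod.val_zero] at this
        omega
      · have h2 : a r - a r' = ((1 : ℕ) : ZMod m) := by push_cast; linear_combination -h
        have h3 := congrArg ZMod.val h2
        rw [ZMod.val_cast_of_lt (by omega)] at h3
        have h4 := gap hk hm a hainj hord t ht r' r (fun hh => hr hh.symm)
        have h5 := ht1 r'
        omega
    have hHne2 := hHne
    obtain ⟨x0, hx0⟩ := hHne2
    classical
    set v : V := c (a i + ((n + 1 : ℕ) : ZMod m)) with hvdef
    set UM : Finset V := Finset.univ.image (fun r : ZMod k => c (a r - 1)) with hUM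
    have huminj : Function.Injective (fun r : ZMod k => c (a r - 1)) := by
      intro r r' h
      have := hcinj h
      have h2 : a r = a r' := by linear_combination this
      exact hainj h2
    have hUMcard : UM.card = k := by
      rw [hUM, Finset.card_image_of_injective _ huminj, Finset.card_univ, ZMod.card]
    have hvUM : v ∉ UM := by
      rw [hUM]
      intro hmem
      obtain ⟨r, _, hr⟩ := Finset.mem_image.mp hmem
      exact hne_um_v r (hcinj hr)
    have hx0UM : x0 ∉ insert v UM := by
      intro hmem
      rcases Finset.mem_insert.mp hmem with h | h
      · exact hnotc hH x0 hx0 _ h.symm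
      · obtain ⟨r, _, hr⟩ := Finset.mem_image.mp h
        exact hnotc hH x0 hx0 _ hr
    set s : Finset V := insert x0 (insert v UM) with hs
    have hscard : s.card = k + 2 := by
      rw [hs, Finset.card_insert_of_notMem hx0UM, Finset.card_insert_of_notMem hvUM, hUMcard]
    have hnotindep : ¬ (∀ x ∈ s, ∀ y ∈ s, x ≠ y → ¬ G.Adj x y) := by
      intro hind
      have := indep_bound G k hindep s hind
      omega
    push_neg at hnotindep
    obtain ⟨x', hx', y', hy', hxy', hadj⟩ := hnotindep
    have hclass : ∀ z ∈ s, z = x0 ∨ z = v ∨ ∃ r : ZMod k, z = c (a r - 1) := by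
      intro z hz
      rcases Finset.mem_insert.mp hz with h | h
      · exact Or.inl h
      · rcases Finset.mem_insert.mp h with h2 | h2
        · exact Or.inr (Or.inl h2)
        · obtain ⟨r, _, hr⟩ := Finset.mem_image.mp h2
          exact Or.inr (Or.inr ⟨r, hr.symm⟩)
    have hx0adj : ∀ z : V, z = v ∨ (∃ r : ZMod k, z = c (a r - 1)) → ¬ G.Adj x0 z := by
      rintro z (rfl | ⟨r, rfl⟩)
      · exact notU hcinj hU _ hne_v x0 hx0
      · exact notU hcinj hU _ (hne_um r) x0 hx0
    -- the key dispatcher for a pair (v, c (a r - 1))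
    have hkey : ∀ r : ZMod k, G.Adj v (c (a r - 1)) →
        G.Adj (c (a i - 1)) (c (a i + ((n + 1 : ℕ) : ZMod m))) := by
      intro r hadj2
      by_cases hr : r = i
      · subst hr
        exact hadj2.symm
      · exfalso
        refine app2 hk hm horder hconn hcinj hcadj hH hHne hHcard hHclique hainj hU hno2f
          i r hr (n + 1) (by omega) ?_ hchord hadj2
        have h4 := gap hk hm a hainj hord t ht i r hr
        omega
    have happ1 : ∀ r r' : ZMod k, G.Adj (c (a r - 1)) (c (a r' - 1)) → False := by
      intro r r' hadj2
      by_cases hrr : r = r'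
      · subst hrr
        exact G.irrefl hadj2
      · exact app1 hk hm horder hconn hcinj hcadj hH hHne hHcard hHclique hainj hU hno2f
          r r' hrr hadj2
    rcases hclass x' hx' with rfl | rfl | ⟨r, rfl⟩
    · rcases hclass y' hy' with rfl | rfl | ⟨r, rfl⟩
      · exact absurd rfl hxy'
      · exact absurd hadj (hx0adj _ (Or.inl rfl))
      · exact absurd hadj (hx0adj _ (Or.inr ⟨r, rfl⟩))
    · rcases hclass y' hy' with rfl | rfl | ⟨r, rfl⟩
      · exact absurd hadj.symm (hx0adj _ (Or.inl rfl))
      · exact absurd rfl hxy'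
      · exact hkey r hadj
    · rcases hclass y' hy' with rfl | rfl | ⟨r', rfl⟩
      · exact absurd hadj.symm (hx0adj _ (Or.inr ⟨r, rfl⟩))
      · exact hkey r hadj.symm
      · exact absurd (happ1 r r' hadj) not_false
end

section
/- For every integer k ≥ 1, the join G = (k+1)K_2 ∨ kK_1 (the graph on 3k+2 vertices obtained from the disjoint union of k+1 copies of K_2 and k isolated vertices by adding all edges between the k isolated vertices and the 2k+2 vertices of the copies of K_2) satisfies κ(G) = k and α(G) = k+1, and G has no 2-factor with at most two connected components. -/
open SimpleGraph

variable {V : Type*}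

/-- The disjoint union of `a` copies of `K₂`. -/
def disjK2 (a : ℕ) : SimpleGraph (Fin a × Fin 2) where
  Adj p q := p.1 = q.1 ∧ p ≠ q
  symm := ⟨fun p q h => ⟨h.1.symm, h.2.symm⟩⟩
  loopless := ⟨fun p h => h.2 rfl⟩

/-- The join of two graphs: their disjoint union together with all edges between them. -/
def graphJoin {α β : Type*} (G₁ : SimpleGraph α) (G₂ : SimpleGraph β) :
    SimpleGraph (α ⊕ β) where
  Adj x y := match x, y with
    | Sum.inl a, Sum.inl b => G₁.Adj a b
    | Sum.inr a, Sum.inr b => G₂.Adj a b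
    | _, _ => True
  symm := by
    constructor
    rintro (a | a) (b | b) h
    · exact h.symm
    · trivial
    · trivial
    · exact h.symm
  loopless := by
    constructor
    rintro (a | a) h
    · exact G₁.loopless.irrefl a h
    · exact G₂.loopless.irrefl a h


section AuxLemmas

variable {k : ℕ}

private abbrev Gk (k : ℕ) := graphJoin (disjK2 (k + 1)) (⊥ : SimpleGraph (Fin k))

private lemma gk_adj_ll {a b : Fin (k+1) × Fin 2} :
    (Gk k).Adj (Sum.inl a) (Sum.inl b) ↔ (a.1 = b.1 ∧ a ≠ b) := Iff.rfl

private lemma gk_adj_lr {a : Fin (k+1) × Fin 2} {b : Fin k} :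
    (Gk k).Adj (Sum.inl a) (Sum.inr b) := trivial

private lemma gk_adj_rl {a : Fin k} {b : Fin (k+1) × Fin 2} :
    (Gk k).Adj (Sum.inr a) (Sum.inl b) := trivial

private lemma gk_adj_rr {a b : Fin k} : ¬ (Gk k).Adj (Sum.inr a) (Sum.inr b) := fun h => h

private lemma card_Vk (k : ℕ) :
    Fintype.card ((Fin (k + 1) × Fin 2) ⊕ Fin k) = 3 * k + 2 := by
  simp [Fintype.card_sum, Fintype.card_prod]
  ring

private lemma reachable_invariant {W β : Type*} {G : SimpleGraph W} {f : W → β}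
    (hf : ∀ a b, G.Adj a b → f a = f b) {x y : W} (h : G.Reachable x y) : f x = f y := by
  obtain ⟨w⟩ := h
  induction w with
  | nil => rfl
  | cons h p ih => exact (hf _ _ h).trans ih

end AuxLemmas

private lemma vc_mem (k : ℕ) (hk : 1 ≤ k) :
    k ∈ {n : ℕ | ∃ S : Finset ((Fin (k + 1) × Fin 2) ⊕ Fin k), S.card = n ∧
      (¬ ((Gk k).induce ((S : Set _)ᶜ)).Connected ∨
        Fintype.card ((Fin (k + 1) × Fin 2) ⊕ Fin k) ≤ S.card + 1)} := by
  refine ⟨Finset.univ.map ⟨Sum.inr, Sum.inr_injective⟩, by simp, Or.inl ?_⟩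
  intro hcon
  set S : Finset ((Fin (k + 1) × Fin 2) ⊕ Fin k) :=
    Finset.univ.map ⟨Sum.inr, Sum.inr_injective⟩ with hS
  have hmeml : ∀ a : Fin (k+1) × Fin 2, (Sum.inl a : (Fin (k + 1) × Fin 2) ⊕ Fin k)
      ∈ ((S : Set _)ᶜ) := by
    intro a
    simp [hS]
  set f : ((S : Set ((Fin (k + 1) × Fin 2) ⊕ Fin k))ᶜ : Set _) → Fin (k+1) :=
    fun z => Sum.elim (fun a => a.1) (fun _ => 0) z.1 with hf
  have hadj : ∀ x y, ((Gk k).induce ((S : Set _)ᶜ)).Adj x y → f x = f y := by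
    rintro ⟨xv, hx⟩ ⟨yv, hy⟩ hadj
    have hG : (Gk k).Adj xv yv := hadj
    match xv, yv with
    | Sum.inl a, Sum.inl b => exact (gk_adj_ll.1 hG).1
    | Sum.inl a, Sum.inr w => exact absurd (by simp [hS]) hy
    | Sum.inr w, _ => exact absurd (by simp [hS]) hx
  have h01 : (⟨1, by omega⟩ : Fin (k+1)) ≠ (⟨0, by omega⟩ : Fin (k+1)) := by
    simp [Fin.ext_iff]
  apply h01
  have := reachable_invariant hadj
    (hcon.preconnected ⟨Sum.inl (⟨1, by omega⟩, 0), hmeml _⟩ ⟨Sum.inl (⟨0, by omega⟩, 0), hmeml _⟩)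
  exact this

private lemma vc_lb (k : ℕ) (hk : 1 ≤ k) :
    ∀ n ∈ {n : ℕ | ∃ S : Finset ((Fin (k + 1) × Fin 2) ⊕ Fin k), S.card = n ∧
      (¬ ((Gk k).induce ((S : Set _)ᶜ)).Connected ∨
        Fintype.card ((Fin (k + 1) × Fin 2) ⊕ Fin k) ≤ S.card + 1)}, k ≤ n := by
  rintro n ⟨S, hcard, hor⟩
  by_contra hlt
  push_neg at hlt
  -- find an inr vertex outside S
  have hinr : ∃ w : Fin k, (Sum.inr w : (Fin (k + 1) × Fin 2) ⊕ Fin k) ∉ S := by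
    by_contra h
    push_neg at h
    have : (Finset.univ.map ⟨Sum.inr, Sum.inr_injective⟩ :
        Finset ((Fin (k + 1) × Fin 2) ⊕ Fin k)) ⊆ S := by
      intro x hx
      simp only [Finset.mem_map, Finset.mem_univ, Function.Embedding.coeFn_mk,
        true_and] at hx
      obtain ⟨w, rfl⟩ := hx
      exact h w
    have := Finset.card_le_card this
    simp [hcard] at this
    omega
  have hinl : ∃ a : Fin (k+1) × Fin 2, (Sum.inl a : (Fin (k + 1) × Fin 2) ⊕ Fin k) ∉ S := by
    by_contra h
    push_neg at h
    have : (Finset.univ.map ⟨Sum.inl, Sum.inl_injective⟩ :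
        Finset ((Fin (k + 1) × Fin 2) ⊕ Fin k)) ⊆ S := by
      intro x hx
      simp only [Finset.mem_map, Finset.mem_univ, Function.Embedding.coeFn_mk,
        true_and] at hx
      obtain ⟨a, rfl⟩ := hx
      exact h a
    have := Finset.card_le_card this
    simp [hcard, Fintype.card_prod] at this
    omega
  obtain ⟨w0, hw0⟩ := hinr
  obtain ⟨a0, ha0⟩ := hinl
  have hw0' : (Sum.inr w0 : (Fin (k + 1) × Fin 2) ⊕ Fin k) ∈ ((S : Set _)ᶜ) := by simpa using hw0
  have ha0' : (Sum.inl a0 : (Fin (k + 1) × Fin 2) ⊕ Fin k) ∈ ((S : Set _)ᶜ) := by simpa using ha0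
  rcases hor with hdis | hle
  · apply hdis
    haveI : Nonempty (((S : Set ((Fin (k + 1) × Fin 2) ⊕ Fin k))ᶜ : Set _)) := ⟨⟨Sum.inl a0, ha0'⟩⟩
    apply SimpleGraph.Connected.mk
    · rintro ⟨xv, hx⟩ ⟨yv, hy⟩
      match xv, yv with
      | Sum.inl a, Sum.inl b =>
        have h1 : ((Gk k).induce ((S : Set _)ᶜ)).Adj ⟨Sum.inl a, hx⟩ ⟨Sum.inr w0, hw0'⟩ := SimpleGraph.comap_adj.mpr gk_adj_lr
        have h2 : ((Gk k).induce ((S : Set _)ᶜ)).Adj ⟨Sum.inr w0, hw0'⟩ ⟨Sum.inl b, hy⟩ := SimpleGraph.comap_adj.mpr gk_adj_rl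
        exact h1.reachable.trans h2.reachable
      | Sum.inl a, Sum.inr w =>
        exact SimpleGraph.Adj.reachable
          ((SimpleGraph.comap_adj.mpr gk_adj_lr : ((Gk k).induce ((S : Set _)ᶜ)).Adj ⟨Sum.inl a, hx⟩ ⟨Sum.inr w, hy⟩))
      | Sum.inr w, Sum.inl b =>
        exact SimpleGraph.Adj.reachable
          ((SimpleGraph.comap_adj.mpr gk_adj_rl : ((Gk k).induce ((S : Set _)ᶜ)).Adj ⟨Sum.inr w, hx⟩ ⟨Sum.inl b, hy⟩))
      | Sum.inr w, Sum.inr w' =>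
        have h1 : ((Gk k).induce ((S : Set _)ᶜ)).Adj ⟨Sum.inr w, hx⟩ ⟨Sum.inl a0, ha0'⟩ := SimpleGraph.comap_adj.mpr gk_adj_rl
        have h2 : ((Gk k).induce ((S : Set _)ᶜ)).Adj ⟨Sum.inl a0, ha0'⟩ ⟨Sum.inr w', hy⟩ := SimpleGraph.comap_adj.mpr gk_adj_lr
        exact h1.reachable.trans h2.reachable
  · rw [card_Vk, hcard] at hle
    omega

private lemma vc_eq (k : ℕ) (hk : 1 ≤ k) : vertexConnectivity (Gk k) = k := by
  unfold vertexConnectivity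
  exact le_antisymm (Nat.sInf_le (vc_mem k hk)) (le_csInf ⟨k, vc_mem k hk⟩ (vc_lb k hk))

private lemma indep_ub (k : ℕ) :
    ∀ n ∈ {n : ℕ | ∃ s : Finset ((Fin (k + 1) × Fin 2) ⊕ Fin k),
      (∀ x ∈ s, ∀ y ∈ s, x ≠ y → ¬ (Gk k).Adj x y) ∧ s.card = n}, n ≤ k + 1 := by
  rintro n ⟨s, hind, rfl⟩
  by_cases h : ∃ w : Fin k, Sum.inr w ∈ s
  · obtain ⟨w, hw⟩ := h
    have hall : ∀ x ∈ s, ∃ w' : Fin k, x = Sum.inr w' := by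
      intro x hx
      match x with
      | Sum.inr w' => exact ⟨w', rfl⟩
      | Sum.inl a =>
        exact absurd gk_adj_lr (hind (Sum.inl a) hx (Sum.inr w) hw (by simp))
    calc s.card ≤ (Finset.univ : Finset (Fin k)).card := by
          apply Finset.card_le_card_of_injOn (fun x => Sum.elim (fun _ => w) id x)
            (fun _ _ => Finset.mem_univ _)
          intro x hx y hy hxy
          obtain ⟨wx, rfl⟩ := hall x hx
          obtain ⟨wy, rfl⟩ := hall y hy
          simpa using hxy
      _ ≤ k + 1 := by simp
  · push_neg at h
    have hall : ∀ x ∈ s, ∃ a : Fin (k+1) × Fin 2, x = Sum.inl a := by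
      intro x hx
      match x with
      | Sum.inl a => exact ⟨a, rfl⟩
      | Sum.inr w => exact absurd hx (h w)
    calc s.card ≤ (Finset.univ : Finset (Fin (k+1))).card := by
          apply Finset.card_le_card_of_injOn
            (fun x => Sum.elim (fun a => a.1) (fun _ => (0 : Fin (k+1))) x)
            (fun _ _ => Finset.mem_univ _)
          intro x hx y hy hxy
          obtain ⟨a, rfl⟩ := hall x hx
          obtain ⟨b, rfl⟩ := hall y hy
          simp only [Sum.elim_inl] at hxy
          by_contra hne
          exact hind _ hx _ hy hne (gk_adj_ll.2 ⟨hxy, fun hab => hne (by rw [hab])⟩)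
      _ = k + 1 := by simp

private lemma indep_mem (k : ℕ) :
    (k + 1) ∈ {n : ℕ | ∃ s : Finset ((Fin (k + 1) × Fin 2) ⊕ Fin k),
      (∀ x ∈ s, ∀ y ∈ s, x ≠ y → ¬ (Gk k).Adj x y) ∧ s.card = n} := by
  refine ⟨Finset.univ.map ⟨fun i => Sum.inl (i, 0), fun i j hij => by
    simpa using hij⟩, ?_, by simp⟩
  intro x hx y hy hne hadj
  simp only [Finset.mem_map, Finset.mem_univ, Function.Embedding.coeFn_mk, true_and] at hx hy
  obtain ⟨i, rfl⟩ := hx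
  obtain ⟨j, rfl⟩ := hy
  have := (gk_adj_ll.1 hadj).1
  simp at this
  exact hne (by rw [this])

private lemma indep_eq (k : ℕ) : _root_.indepNum (Gk k) = k + 1 := by
  unfold _root_.indepNum
  apply le_antisymm
  · exact csSup_le ⟨k + 1, indep_mem k⟩ (indep_ub k)
  · apply le_csSup ⟨3 * k + 2, ?_⟩ (indep_mem k)
    rintro n ⟨s, _, rfl⟩
    calc s.card ≤ Fintype.card ((Fin (k + 1) × Fin 2) ⊕ Fin k) := Finset.card_le_univ s
      _ = 3 * k + 2 := card_Vk k

private lemma no_two_factor (k : ℕ) : ¬ HasTwoFactorAtMostTwo (Gk k) := by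
  rintro ⟨F, -, hdeg, -⟩
  classical
  have claim1 : ∀ w : Fin k,
      (Finset.univ.filter fun v : Fin (k+1) × Fin 2 => F.Adj (Sum.inl v) (Sum.inr w)).card = 2 := by
    intro w
    have hset : F.neighborSet (Sum.inr w) =
        (((Finset.univ.filter fun v : Fin (k+1) × Fin 2 => F.Adj (Sum.inl v) (Sum.inr w)).map
          ⟨Sum.inl, Sum.inl_injective⟩ : Finset ((Fin (k+1) × Fin 2) ⊕ Fin k)) :
          Set ((Fin (k+1) × Fin 2) ⊕ Fin k)) := by
      ext u
      constructor
      · intro hu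
        match u with
        | Sum.inl v =>
          simp only [Finset.coe_map, Set.mem_image, Finset.mem_coe, Finset.mem_filter,
            Function.Embedding.coeFn_mk]
          exact ⟨v, ⟨Finset.mem_univ v, hu.symm⟩, rfl⟩
        | Sum.inr w' => exact absurd (F.adj_sub hu) gk_adj_rr
      · intro hu
        simp only [Finset.coe_map, Set.mem_image, Finset.mem_coe, Finset.mem_filter,
          Function.Embedding.coeFn_mk] at hu
        obtain ⟨v, ⟨-, hv⟩, rfl⟩ := hu
        exact hv.symm
    have h2 := hdeg (Sum.inr w)
    rw [hset, Set.ncard_coe_finset, Finset.card_map] at h2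
    exact h2
  have claim2 : ∀ v : Fin (k+1) × Fin 2,
      1 ≤ (Finset.univ.filter fun w : Fin k => F.Adj (Sum.inl v) (Sum.inr w)).card := by
    intro v
    rw [Nat.one_le_iff_ne_zero, Ne, Finset.card_eq_zero]
    intro hempty
    have hnone : ∀ w : Fin k, ¬ F.Adj (Sum.inl v) (Sum.inr w) := by
      intro w hw
      have : w ∈ Finset.univ.filter fun w : Fin k => F.Adj (Sum.inl v) (Sum.inr w) :=
        Finset.mem_filter.2 ⟨Finset.mem_univ w, hw⟩
      rw [hempty] at this
      exact absurd this (Finset.notMem_empty w)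
    obtain ⟨a, b, hab, hsetab⟩ := Set.ncard_eq_two.1 (hdeg (Sum.inl v))
    have ha : F.Adj (Sum.inl v) a := by
      have : a ∈ F.neighborSet (Sum.inl v) := by rw [hsetab]; simp
      exact this
    have hb : F.Adj (Sum.inl v) b := by
      have : b ∈ F.neighborSet (Sum.inl v) := by rw [hsetab]; simp
      exact this
    have key : ∀ u, F.Adj (Sum.inl v) u →
        ∃ c : Fin (k+1) × Fin 2, u = Sum.inl c ∧ c.1 = v.1 ∧ c.2 ≠ v.2 := by
      intro u hu
      match u with
      | Sum.inr w => exact absurd hu (hnone w)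
      | Sum.inl c =>
        have hGc := gk_adj_ll.1 (F.adj_sub hu)
        refine ⟨c, rfl, hGc.1.symm, fun h2 => hGc.2 ?_⟩
        exact Prod.ext_iff.2 ⟨hGc.1, h2.symm⟩
    obtain ⟨c1, rfl, hc11, hc12⟩ := key a ha
    obtain ⟨c2, rfl, hc21, hc22⟩ := key b hb
    apply hab
    have hval : c1.2 = c2.2 := by
      apply Fin.ext
      have t1 : c1.2.val < 2 := c1.2.isLt
      have t2 : c2.2.val < 2 := c2.2.isLt
      have t3 : v.2.val < 2 := v.2.isLt
      have n1 : c1.2.val ≠ v.2.val := fun h => hc12 (Fin.ext h)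
      have n2 : c2.2.val ≠ v.2.val := fun h => hc22 (Fin.ext h)
      omega
    rw [Prod.ext_iff.2 ⟨hc11.trans hc21.symm, hval⟩]
  have hsum : ∑ w : Fin k, (Finset.univ.filter fun v : Fin (k+1) × Fin 2 =>
      F.Adj (Sum.inl v) (Sum.inr w)).card
      = ∑ v : Fin (k+1) × Fin 2, (Finset.univ.filter fun w : Fin k =>
        F.Adj (Sum.inl v) (Sum.inr w)).card := by
    simp only [Finset.card_filter]
    exact Finset.sum_comm
  have h1 : ∑ w : Fin k, (Finset.univ.filter fun v : Fin (k+1) × Fin 2 =>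
      F.Adj (Sum.inl v) (Sum.inr w)).card = 2 * k := by
    rw [Finset.sum_congr rfl fun w _ => claim1 w]
    simp [mul_comm]
  have h2 : 2 * (k + 1) ≤ ∑ v : Fin (k+1) × Fin 2, (Finset.univ.filter fun w : Fin k =>
      F.Adj (Sum.inl v) (Sum.inr w)).card := by
    calc 2 * (k + 1) = ∑ _v : Fin (k+1) × Fin 2, 1 := by
          simp [Fintype.card_prod]
          ring
      _ ≤ _ := Finset.sum_le_sum fun v _ => claim2 v
  rw [h1] at hsum
  rw [← hsum] at h2
  omega

theorem statement17 (k : ℕ) (hk : 1 ≤ k) :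
    Fintype.card ((Fin (k + 1) × Fin 2) ⊕ Fin k) = 3 * k + 2 ∧
    vertexConnectivity (graphJoin (disjK2 (k + 1)) (⊥ : SimpleGraph (Fin k))) = k ∧
    _root_.indepNum (graphJoin (disjK2 (k + 1)) (⊥ : SimpleGraph (Fin k))) = k + 1 ∧
    ¬ HasTwoFactorAtMostTwo (graphJoin (disjK2 (k + 1)) (⊥ : SimpleGraph (Fin k))) := by
  refine ⟨card_Vk k, ?_, ?_, ?_⟩
  · exact vc_eq k hk
  · exact indep_eq k
  · exact no_two_factor k
end
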